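/- Let N be a rooted phylogenetic network on a finite set X and let Ñ be its normalisation. For any two vertices u, v of Ñ, there is a directed path from u to v in Ñ if and only if there is a directed path from u to v in N; that is, u ≤_Ñ v if and only if u ≤_N v. -/

import Mathlib

/-!
Formalisation framework for rooted phylogenetic networks.

A network is represented as a directed graph on an ambient vertex type `V`:
a vertex set `verts`, a root vertex `root`, and an arc relation `arc`.
-/

structure Net (V : Type*) where
  verts : Set V
  root : V
  arc : V → V → Prop

namespace Net

variable {V : Type*} {W : Type*}

/-- `N.reach u v` means there is a (possibly empty) directed path from `u` to `v`. -/
def reach (N : Net V) : V → V → Prop := Relation.ReflTransGen N.arc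

/-- The in-degree of a vertex. -/
noncomputable def inDeg (N : Net V) (v : V) : ℕ := {u | N.arc u v}.ncard

/-- The out-degree of a vertex. -/
noncomputable def outDeg (N : Net V) (v : V) : ℕ := {w | N.arc v w}.ncard

/-- The leaves of `N`: the vertices of out-degree 0. -/
def leaves (N : Net V) : Set V := {v ∈ N.verts | N.outDeg v = 0}

/-- `N.IsPathFrom u v l` : the list `l` is a directed path in `N` from `u` to `v`
(consecutive entries joined by arcs; a one-element list is the empty path). -/
def IsPathFrom (N : Net V) (u v : V) (l : List V) : Prop :=
  l.Chain' N.arc ∧ l.head? = some u ∧ l.getLast? = some v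

/-- A vertex is visible if some leaf is such that every directed path from the
root to that leaf passes through the vertex. -/
def Visible (N : Net V) (x : V) : Prop :=
  x ∈ N.verts ∧ ∃ y ∈ N.leaves, ∀ l : List V, N.IsPathFrom N.root y l → x ∈ l

/-- A subdividing vertex is one of in-degree 1 and out-degree 1. -/
def Subdividing (N : Net V) (v : V) : Prop := N.inDeg v = 1 ∧ N.outDeg v = 1

/-- The digraph `Cov(N)` on the visible vertices of `N`: an arc `(u,v)` whenever
`u ≠ v`, `u →_N v`, and no visible vertex lies strictly between `u` and `v`. -/
def cov (N : Net V) : Net V where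
  verts := {v | N.Visible v}
  root := N.root
  arc u v := N.Visible u ∧ N.Visible v ∧ u ≠ v ∧ N.reach u v ∧
    ¬ ∃ w, N.Visible w ∧ w ≠ u ∧ w ≠ v ∧ N.reach u w ∧ N.reach w v

/-- The normalisation `Ñ` of `N`: obtained from `Cov(N)` by suppressing every
subdividing vertex.  Its vertices are the visible vertices of `N` that are not
subdividing in `Cov(N)`, with an arc `(u,v)` whenever `Cov(N)` has a directed path
from `u` to `v` (of length at least one) all of whose interior vertices are
subdividing in `Cov(N)`. -/
def normalise (N : Net V) : Net V where
  verts := {v | N.Visible v ∧ ¬ N.cov.Subdividing v}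
  root := N.root
  arc u v := (N.Visible u ∧ ¬ N.cov.Subdividing u) ∧ (N.Visible v ∧ ¬ N.cov.Subdividing v) ∧
    ∃ l : List V, N.cov.IsPathFrom u v l ∧ 2 ≤ l.length ∧
      ∀ w ∈ l.tail.dropLast, N.cov.Subdividing w

/-- `N` is a rooted phylogenetic network on the finite nonempty leaf set `X`. -/
structure IsPhylo (N : Net V) (X : Set V) : Prop where
  finite : N.verts.Finite
  nonempty : X.Nonempty
  arc_mem : ∀ ⦃u v : V⦄, N.arc u v → u ∈ N.verts ∧ v ∈ N.verts
  acyclic : ∀ ⦃u v : V⦄, N.arc u v → ¬ N.reach v u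
  root_mem : N.root ∈ N.verts
  root_inDeg : N.inDeg N.root = 0
  root_unique : ∀ v ∈ N.verts, N.inDeg v = 0 → v = N.root
  leaves_eq : N.leaves = X
  leaf_inDeg : ∀ x ∈ X, N.inDeg x = 1
  interior_deg : ∀ v ∈ N.verts, v ≠ N.root → v ∉ X →
    (N.inDeg v = 1 ∧ 2 ≤ N.outDeg v) ∨ (N.outDeg v = 1 ∧ 2 ≤ N.inDeg v)

/-- `N` has no shortcuts: no arc `(u,v)` such that there is also a directed path
from `u` to `v` of length at least 2 (i.e. a path-list with at least 3 entries). -/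
def NoShortcuts (N : Net V) : Prop :=
  ∀ u v : V, N.arc u v → ¬ ∃ l : List V, N.IsPathFrom u v l ∧ 3 ≤ l.length

/-- Tree-child: every vertex is visible. -/
def TreeChild (N : Net V) : Prop := ∀ v ∈ N.verts, N.Visible v

/-- Normal: tree-child with no shortcuts. -/
def Normal (N : Net V) : Prop := N.TreeChild ∧ N.NoShortcuts

/-- A tree: every vertex has in-degree at most 1. -/
def IsTree (N : Net V) : Prop := ∀ v ∈ N.verts, N.inDeg v ≤ 1

/-- The cluster of `v`: the set of leaves reachable from `v`. -/
def cluster (N : Net V) (v : V) : Set V := {x ∈ N.leaves | N.reach v x}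

/-- The identifying set of `v`: the set of leaves `x` such that every directed
path from the root to `x` passes through `v`. -/
def ident (N : Net V) (v : V) : Set V :=
  {x ∈ N.leaves | ∀ l : List V, N.IsPathFrom N.root x l → v ∈ l}

/-- A digraph isomorphism between two networks, given by the map `f`. -/
def NetEquiv (M : Net V) (M' : Net W) (f : V → W) : Prop :=
  Set.BijOn f M.verts M'.verts ∧
    ∀ u ∈ M.verts, ∀ v ∈ M.verts, (M.arc u v ↔ M'.arc (f u) (f v))

/-- Two networks over the same ambient type are equivalent relative to a leaf set
`X` if there is a digraph isomorphism between them fixing each element of `X`. -/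
def EquivOn (M M' : Net V) (X : Set V) : Prop :=
  ∃ f : V → V, NetEquiv M M' f ∧ ∀ x ∈ X, f x = x

/-- `N₁ ⊕ N₂` : disjoint copies of `N₁` and `N₂` under a new root (`none`). -/
def oplus {V₁ V₂ : Type*} (N₁ : Net V₁) (N₂ : Net V₂) : Net (Option (V₁ ⊕ V₂)) where
  verts := insert none
    ((fun v => some (Sum.inl v)) '' N₁.verts ∪ (fun v => some (Sum.inr v)) '' N₂.verts)
  root := none
  arc a b :=
    match a, b with
    | none, some (Sum.inl w) => w = N₁.root
    | none, some (Sum.inr w) => w = N₂.root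
    | some (Sum.inl u), some (Sum.inl w) => N₁.arc u w
    | some (Sum.inr u), some (Sum.inr w) => N₂.arc u w
    | _, _ => False

/-- `N₁ ⊗ N₂` : identify each leaf `x` of `N₁` with the root of its own copy of `N₂`;
the copy of a non-leaf vertex `u` of `N₁` is `Sum.inl u`, and the vertex `w` of the
copy of `N₂` attached at leaf `x` of `N₁` is `Sum.inr (x, w)`. -/
def otimes {V₁ V₂ : Type*} (N₁ : Net V₁) (N₂ : Net V₂) : Net (V₁ ⊕ V₁ × V₂) where
  verts := Sum.inl '' (N₁.verts \ N₁.leaves) ∪ Sum.inr '' (N₁.leaves ×ˢ N₂.verts)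
  root := Sum.inl N₁.root
  arc a b :=
    match a, b with
    | Sum.inl u, Sum.inl w => N₁.arc u w ∧ w ∉ N₁.leaves
    | Sum.inl u, Sum.inr (x, w) => x ∈ N₁.leaves ∧ N₁.arc u x ∧ w = N₂.root
    | Sum.inr (x, w), Sum.inr (x', w') => x = x' ∧ x ∈ N₁.leaves ∧ N₂.arc w w'
    | _, _ => False

end Net

/-- A hierarchy: a collection of sets any two of which are disjoint or nested. -/
def IsHierarchy {V : Type*} (C : Set (Set V)) : Prop :=
  ∀ A ∈ C, ∀ B ∈ C, A ∩ B = ∅ ∨ A ⊆ B ∨ B ⊆ A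

/-!
A path in `N` between visible vertices `u, v` can be refined into a path of `Cov(N)`: if some
visible vertex lies strictly between them, split there; both halves have smaller intervals
`{w | u →_N w →_N v}`, which are finite and shrink strictly because `→_N` is antisymmetric.
A `Cov(N)` path between non-subdividing vertices then cuts, at its non-subdividing vertices,
into arcs of `Ñ`. Conversely every arc of `Ñ` comes from a `Cov(N)` path, hence from an `N` path.
-/

namespace Net

variable {V : Type*}

theorem IsPathFrom.reach {N : Net V} {u v : V} {l : List V} (h : N.IsPathFrom u v l) :
    N.reach u v := by
  obtain ⟨hchain, hhead, hlast⟩ := h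
  have hne : l ≠ [] := by rintro rfl; simp at hhead
  have := List.relationReflTransGen_of_exists_isChain l hchain hne
  rwa [(List.head_eq_iff_head?_eq_some hne).2 hhead,
    (List.getLast_eq_iff_getLast?_eq_some hne).2 hlast] at this

theorem reach_antisymm_of_acyclic {N : Net V} (hac : ∀ ⦃u v : V⦄, N.arc u v → ¬ N.reach v u)
    {u v : V} (huv : N.reach u v) (hvu : N.reach v u) : u = v := by
  induction huv using Relation.ReflTransGen.head_induction_on with
  | refl => rfl
  | head hab hbv _ => exact absurd (hbv.trans hvu) (hac hab)

theorem eq_or_mem_of_reach {N : Net V}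
    (hmem : ∀ ⦃u v : V⦄, N.arc u v → u ∈ N.verts ∧ v ∈ N.verts) {u v : V} (h : N.reach u v) :
    v = u ∨ v ∈ N.verts := by
  induction h with
  | refl => exact .inl rfl
  | tail _ hbc _ => exact .inr (hmem hbc).2

def interval (N : Net V) (u v : V) : Set V := {w | N.reach u w ∧ N.reach w v}

theorem mem_interval {N : Net V} {u v w : V} :
    w ∈ N.interval u v ↔ N.reach u w ∧ N.reach w v :=
  Iff.rfl

theorem IsPhylo.interval_finite {N : Net V} {X : Set V} (hN : N.IsPhylo X) (u v : V) :
    (N.interval u v).Finite :=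
  (hN.finite.insert u).subset fun _ hw => eq_or_mem_of_reach hN.arc_mem hw.1

section Antisymmetric

variable {N : Net V} (hanti : ∀ ⦃u v : V⦄, N.reach u v → N.reach v u → u = v)
include hanti

theorem interval_ssubset_interval_left {u v w : V} (huv : N.reach u v) (hwv : N.reach w v)
    (hne : w ≠ v) : N.interval u w ⊂ N.interval u v :=
  (Set.ssubset_iff_of_subset fun _ hx => mem_interval.2 ⟨hx.1, hx.2.trans hwv⟩).2
    ⟨v, mem_interval.2 ⟨huv, .refl⟩, fun hv => hne (hanti hwv hv.2)⟩

theorem interval_ssubset_interval_right {u v w : V} (huv : N.reach u v) (huw : N.reach u w)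
    (hne : w ≠ u) : N.interval w v ⊂ N.interval u v :=
  (Set.ssubset_iff_of_subset fun _ hx => mem_interval.2 ⟨huw.trans hx.1, hx.2⟩).2
    ⟨u, mem_interval.2 ⟨.refl, huv⟩, fun hu => hne (hanti huw hu.1).symm⟩

theorem cov_reach_of_reach (hfin : ∀ u v, (N.interval u v).Finite) {u v : V}
    (hu : N.Visible u) (hv : N.Visible v) (huv : N.reach u v) : N.cov.reach u v := by
  by_cases hne : u = v
  · exact hne ▸ .refl
  by_cases hmid : ∃ w, N.Visible w ∧ w ≠ u ∧ w ≠ v ∧ N.reach u w ∧ N.reach w v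
  · obtain ⟨w, hw, hwu, hwv, huw, hwv'⟩ := hmid
    have hlt_left :=
      Set.ncard_lt_ncard (interval_ssubset_interval_left hanti huv hwv' hwv) (hfin u v)
    have hlt_right :=
      Set.ncard_lt_ncard (interval_ssubset_interval_right hanti huv huw hwu) (hfin u v)
    exact (cov_reach_of_reach hfin hu hw huw).trans (cov_reach_of_reach hfin hw hv hwv')
  · exact .single ⟨hu, hv, hne, huv, hmid⟩
termination_by (N.interval u v).ncard

end Antisymmetric

def SuppressedPath (M : Net V) (u v : V) : Prop :=
  ∃ l : List V, M.IsPathFrom u v l ∧ 2 ≤ l.length ∧ ∀ w ∈ l.tail.dropLast, M.Subdividing w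

theorem suppressedPath_of_arc {M : Net V} {u v : V} (h : M.arc u v) : M.SuppressedPath u v :=
  ⟨[u, v], ⟨List.isChain_pair.2 h, rfl, rfl⟩, le_rfl, by simp⟩

theorem SuppressedPath.cons {M : Net V} {u w v : V} (huw : M.arc u w) (hw : M.Subdividing w)
    (h : M.SuppressedPath w v) : M.SuppressedPath u v := by
  obtain ⟨_ | ⟨a, _ | ⟨b, l⟩⟩, ⟨hchain, hhead, hlast⟩, hlen, hint⟩ := h
  · simp at hlen
  · simp at hlen
  · obtain rfl : a = w := by simpa using hhead
    refine ⟨u :: a :: b :: l, ⟨hchain.cons_cons huw, rfl, hlast⟩, by simp, ?_⟩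
    simp only [List.tail_cons, List.dropLast_cons_cons, List.mem_cons] at hint ⊢
    rintro x (rfl | hx)
    · exact hw
    · exact hint x hx

theorem SuppressedPath.reach {M : Net V} {u v : V} (h : M.SuppressedPath u v) : M.reach u v :=
  h.choose_spec.1.reach

theorem normalise_arc_iff {N : Net V} {u v : V} :
    N.normalise.arc u v ↔
      u ∈ N.normalise.verts ∧ v ∈ N.normalise.verts ∧ N.cov.SuppressedPath u v :=
  Iff.rfl

theorem reach_of_normalise_reach {N : Net V} {u v : V} (h : N.normalise.reach u v) :
    N.reach u v := by
  refine Relation.reflTransGen_closed (fun a b hab => ?_) u v h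
  exact Relation.reflTransGen_closed (fun _ _ h => h.2.2.2.1) a b
    (normalise_arc_iff.1 hab).2.2.reach

theorem normalise_reach_of_cov_reach_of_suppressedPath {N : Net V} {u b : V}
    (hu : u ∈ N.normalise.verts) (hub : N.cov.reach u b) :
    ∀ v ∈ N.normalise.verts, N.cov.SuppressedPath b v → N.normalise.reach u v := by
  induction hub with
  | refl => exact fun v hv h => .single (normalise_arc_iff.2 ⟨hu, hv, h⟩)
  | @tail b c _ hbc ih =>
    intro v hv hcv
    by_cases hc : N.cov.Subdividing c
    · exact ih v hv (hcv.cons hbc hc)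
    · have hc' : c ∈ N.normalise.verts := ⟨hbc.2.1, hc⟩
      exact (ih c hc' (suppressedPath_of_arc hbc)).tail (normalise_arc_iff.2 ⟨hc', hv, hcv⟩)

theorem normalise_reach_of_cov_reach {N : Net V} {u v : V} (hu : u ∈ N.normalise.verts)
    (hv : v ∈ N.normalise.verts) (h : N.cov.reach u v) : N.normalise.reach u v := by
  obtain rfl | ⟨b, hub, hbv⟩ := h.cases_tail
  · exact .refl
  · exact normalise_reach_of_cov_reach_of_suppressedPath hu hub v hv (suppressedPath_of_arc hbv)

end Net

/-- For any two vertices `u, v` of the normalisation `Ñ`, there is a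
directed path from `u` to `v` in `Ñ` iff there is one in `N`: `u ≤_Ñ v ↔ u ≤_N v`. -/
theorem stmt9 {V : Type*} (N : Net V) (X : Set V) (hN : N.IsPhylo X) :
    ∀ u ∈ N.normalise.verts, ∀ v ∈ N.normalise.verts,
      (N.normalise.reach u v ↔ N.reach u v) := by
  intro u hu v hv
  refine ⟨Net.reach_of_normalise_reach, fun h => Net.normalise_reach_of_cov_reach hu hv ?_⟩
  exact Net.cov_reach_of_reach (fun _ _ => Net.reach_antisymm_of_acyclic hN.acyclic)
    hN.interval_finite hu.1 hv.1 h
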